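/- arXiv:1502.06368 — 8 statements merged into one kernel-verified Lean document; each statement's English description precedes it below -/
import Mathlib

section
/- Let d : ℝ^q → ℝ be concave and differentiable, and suppose x̄(u) is a point with d(u) = f(x̄(u)) + uᵀ∇d(u) where f(x̄(u)) denotes the primal objective value. Suppose the Lagrangian saddle point property holds: L(x⋆, u) ≤ d⋆ for all dual feasible u, where x⋆ is the primal optimum, f⋆ = d⋆, and L(·,u) is strongly convex on X with parameter θ. Then for every dual feasible u, ‖x̄(u) − x⋆‖ ≤ √(2(d⋆ − d(u))/θ). -/
/-!
Strong convexity of `L(·,u)` at `x̄(u)`, combined with the first-order optimality condition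
`⟪g, x⋆ - x̄(u)⟫ ≥ 0`, gives quadratic growth `θ/2 ‖x̄(u) - x⋆‖² ≤ L(x⋆,u) - L(x̄(u),u)`.
The right-hand side is at most `d⋆ - d(u)` by the saddle point property and `d(u) = L(x̄(u),u)`.
-/

open scoped RealInnerProductSpace

theorem le_sqrt_two_mul_div_of_half_mul_sq_le {a b θ : ℝ} (hθ : 0 < θ)
    (h : θ / 2 * a ^ 2 ≤ b) : a ≤ √(2 * b / θ) :=
  Real.le_sqrt_of_sq_le <| by rw [le_div_iff₀ hθ]; linarith

theorem half_mul_sq_norm_sub_le_of_variational_ineq {E : Type*} [NormedAddCommGroup E]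
    [InnerProductSpace ℝ E] {φ : E → ℝ} {θ : ℝ} {X : Set E} {x g : E}
    (hsc : ∀ y ∈ X, θ / 2 * ‖x - y‖ ^ 2 ≤ φ y - φ x - ⟪g, y - x⟫)
    (hfoc : ∀ y ∈ X, 0 ≤ ⟪g, y - x⟫) {y : E} (hy : y ∈ X) :
    θ / 2 * ‖x - y‖ ^ 2 ≤ φ y - φ x := by
  linarith [hsc y hy, hfoc y hy]

theorem primal_distance_bound_general {n q : ℕ}
    (X : Set (EuclideanSpace ℝ (Fin n))) (D : Set (EuclideanSpace ℝ (Fin q)))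
    (L : EuclideanSpace ℝ (Fin n) → EuclideanSpace ℝ (Fin q) → ℝ)
    (d : EuclideanSpace ℝ (Fin q) → ℝ)
    (θ dstar : ℝ) (hθ : 0 < θ)
    (xbar : EuclideanSpace ℝ (Fin q) → EuclideanSpace ℝ (Fin n))
    (xstar : EuclideanSpace ℝ (Fin n)) (hxstar : xstar ∈ X)
    (G : EuclideanSpace ℝ (Fin q) → EuclideanSpace ℝ (Fin n) → Set (EuclideanSpace ℝ (Fin n)))
    -- strong convexity of `L(·,u)` on `X` with parameter `θ`
    (hsc : ∀ u ∈ D, ∀ x ∈ X, ∀ y ∈ X, ∀ g ∈ G u x,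
      L y u - L x u - ⟪g, y - x⟫ ≥ θ / 2 * ‖x - y‖ ^ 2)
    (hxbarX : ∀ u ∈ D, xbar u ∈ X)
    (hfoc : ∀ u ∈ D, ∃ g ∈ G u (xbar u), ∀ x ∈ X, 0 ≤ ⟪g, x - xbar u⟫)
    -- `d(u) = L(x̄(u), u)`
    (hd : ∀ u ∈ D, d u = L (xbar u) u)
    -- saddle point property `L(x⋆, u) ≤ d⋆` for dual feasible `u`
    (hsaddle : ∀ u ∈ D, L xstar u ≤ dstar) :
    ∀ u ∈ D, ‖xbar u - xstar‖ ≤ Real.sqrt (2 * (dstar - d u) / θ) := by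
  intro u hu
  obtain ⟨g, hgG, hg⟩ := hfoc u hu
  have growth : θ / 2 * ‖xbar u - xstar‖ ^ 2 ≤ L xstar u - L (xbar u) u :=
    half_mul_sq_norm_sub_le_of_variational_ineq (φ := (L · u))
      (fun y hy => hsc u hu _ (hxbarX u hu) y hy g hgG) hg hxstar
  apply le_sqrt_two_mul_div_of_half_mul_sq_le hθ
  linarith [hsaddle u hu, hd u hu]

/-- Primal error bound via dual suboptimality: if `L(·,u)` is strongly convex on `X`
with parameter `θ`, `x̄(u)` minimizes `L(·,u)` over `X` with `d(u) = L(x̄(u),u)`,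
and the saddle point property `L(x⋆,u) ≤ d⋆` holds for all dual feasible `u`, then
`‖x̄(u) − x⋆‖ ≤ √(2(d⋆ − d(u))/θ)`. -/
theorem primal_distance_bound {n q : ℕ}
    (X : Set (EuclideanSpace ℝ (Fin n))) (D : Set (EuclideanSpace ℝ (Fin q)))
    (L : EuclideanSpace ℝ (Fin n) → EuclideanSpace ℝ (Fin q) → ℝ)
    (d : EuclideanSpace ℝ (Fin q) → ℝ)
    (θ dstar : ℝ) (hθ : 0 < θ)
    (xbar : EuclideanSpace ℝ (Fin q) → EuclideanSpace ℝ (Fin n))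
    (xstar : EuclideanSpace ℝ (Fin n)) (hxstar : xstar ∈ X)
    (G : EuclideanSpace ℝ (Fin q) → EuclideanSpace ℝ (Fin n) → Set (EuclideanSpace ℝ (Fin n)))
    -- `G u x` consists of subgradients of `L(·,u)` at `x`
    (hG : ∀ u ∈ D, ∀ x ∈ X, ∀ g ∈ G u x, ∀ y, L x u + ⟪g, y - x⟫ ≤ L y u)
    -- strong convexity of `L(·,u)` on `X` with parameter `θ`
    (hsc : ∀ u ∈ D, ∀ x ∈ X, ∀ y ∈ X, ∀ g ∈ G u x,
      L y u - L x u - ⟪g, y - x⟫ ≥ θ / 2 * ‖x - y‖ ^ 2)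
    (hxbarX : ∀ u ∈ D, xbar u ∈ X)
    -- `x̄(u)` minimizes `L(·,u)` over `X`, with first-order optimality
    (hmin : ∀ u ∈ D, ∀ x ∈ X, L (xbar u) u ≤ L x u)
    (hfoc : ∀ u ∈ D, ∃ g ∈ G u (xbar u), ∀ x ∈ X, 0 ≤ ⟪g, x - xbar u⟫)
    -- `d(u) = L(x̄(u), u)`
    (hd : ∀ u ∈ D, d u = L (xbar u) u)
    -- saddle point property `L(x⋆, u) ≤ d⋆` for dual feasible `u`
    (hsaddle : ∀ u ∈ D, L xstar u ≤ dstar) :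
    ∀ u ∈ D, ‖xbar u - xstar‖ ≤ Real.sqrt (2 * (dstar - d u) / θ) :=
  primal_distance_bound_general X D L d θ dstar hθ xbar xstar hxstar G hsc hxbarX hfoc hd hsaddle
end

section
/- Let d : ℝ^q → ℝ be concave and differentiable with ∇d Lipschitz with constant L on ℝ^q. Let D = {u ∈ ℝ^q : u⁽¹⁾,…,u⁽ᵐ⁾ ≥ 0} (first m components nonnegative, remaining p free, m + p = q), u ∈ D, and let A(u) = {i ≤ m : u⁽ⁱ⁾ + (1/L)∇⁽ⁱ⁾d(u) < 0} and I(u) be the complementary index set in {1,…,q}. Then with d⋆ = sup_{v∈D} d(v), d⋆ − d(u) ≥ (1/2)∑_{i∈A(u)} (−∇⁽ⁱ⁾d(u) u⁽ⁱ⁾) + (1/(2L)) ∑_{i∈I(u)} (∇⁽ⁱ⁾d(u))². -/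
open scoped RealInnerProductSpace

lemma descent_lemma {F : Type*} [NormedAddCommGroup F] [InnerProductSpace ℝ F] [CompleteSpace F]
    (f : F → ℝ) (f' : F → F) (L : ℝ) (hL : 0 < L)
    (hgrad : ∀ x, HasGradientAt f (f' x) x)
    (hlip : ∀ x y, ‖f' x - f' y‖ ≤ L * ‖x - y‖)
    (u w : F) :
    f u + ⟪f' u, w⟫ - L / 2 * ‖w‖ ^ 2 ≤ f (u + w) := by
  have hc : Continuous f' := by
    have : LipschitzWith (Real.toNNReal L) f' := by
      apply LipschitzWith.of_dist_le_mul
      intro x y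
      rw [dist_eq_norm, dist_eq_norm]
      simpa [Real.coe_toNNReal L hL.le] using hlip x y
    exact this.continuous
  set φ : ℝ → ℝ := fun t => ⟪f' (u + t • w), w⟫ with hφ
  have hφc : Continuous φ := by
    apply Continuous.inner
    · exact hc.comp (by continuity)
    · exact continuous_const
  have hderiv : ∀ t ∈ Set.uIcc (0:ℝ) 1, HasDerivAt (fun t => f (u + t • w)) (φ t) t := by
    intro t _
    have h1 : HasDerivAt (fun t : ℝ => u + t • w) w t := by
      simpa using ((hasDerivAt_id t).smul_const w).const_add u
    have h2 := (hasGradientAt_iff_hasFDerivAt.mp (hgrad (u + t • w))).comp_hasDerivAt t h1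
    exact h2
  have hint : f (u + w) - f u = ∫ t in (0:ℝ)..1, φ t := by
    have := intervalIntegral.integral_eq_sub_of_hasDerivAt hderiv (hφc.intervalIntegrable 0 1)
    simpa using this.symm
  have hbound : ∀ t ∈ Set.Icc (0:ℝ) 1, ⟪f' u, w⟫ - L * ‖w‖ ^ 2 * t ≤ φ t := by
    intro t ht
    have h1 : |φ t - ⟪f' u, w⟫| ≤ L * ‖w‖ ^ 2 * t := by
      have he : φ t - ⟪f' u, w⟫ = ⟪f' (u + t • w) - f' u, w⟫ := by
        rw [inner_sub_left]
      rw [he]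
      calc |⟪f' (u + t • w) - f' u, w⟫| ≤ ‖f' (u + t • w) - f' u‖ * ‖w‖ :=
            abs_real_inner_le_norm _ _
        _ ≤ (L * ‖(u + t • w) - u‖) * ‖w‖ :=
            mul_le_mul_of_nonneg_right (hlip _ _) (norm_nonneg _)
        _ = L * ‖w‖ ^ 2 * t := by
            rw [add_sub_cancel_left, norm_smul, Real.norm_eq_abs, abs_of_nonneg ht.1]
            ring
    have := (abs_le.mp h1).1
    linarith
  have hmono : ∫ t in (0:ℝ)..1, (⟪f' u, w⟫ - L * ‖w‖ ^ 2 * t) ≤ ∫ t in (0:ℝ)..1, φ t := by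
    apply intervalIntegral.integral_mono_on zero_le_one
      ((by continuity : Continuous fun t : ℝ => ⟪f' u, w⟫ - L * ‖w‖ ^ 2 * t).intervalIntegrable 0 1)
      (hφc.intervalIntegrable 0 1) hbound
  have hval : ∫ t in (0:ℝ)..1, (⟪f' u, w⟫ - L * ‖w‖ ^ 2 * t) = ⟪f' u, w⟫ - L / 2 * ‖w‖ ^ 2 := by
    rw [intervalIntegral.integral_sub (intervalIntegrable_const)
      (((by continuity : Continuous fun t : ℝ => L * ‖w‖ ^ 2 * t)).intervalIntegrable 0 1)]
    rw [intervalIntegral.integral_const, intervalIntegral.integral_const_mul, integral_id,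
      smul_eq_mul]
    ring
  linarith

open Classical in

open Classical in
/-- Coordinatewise projected-gradient bound: for concave `d` with `L`-Lipschitz gradient
on `ℝ^{m+p}`, dual feasible set `D` (first `m` coordinates nonnegative), `u ∈ D`,
active set `A(u) = {i ≤ m : u⁽ⁱ⁾ + (1/L)∇⁽ⁱ⁾d(u) < 0}` and complement `I(u)`:
`d⋆ − d(u) ≥ (1/2)∑_{A(u)}(−∇⁽ⁱ⁾d(u)u⁽ⁱ⁾) + (1/(2L))∑_{I(u)}(∇⁽ⁱ⁾d(u))²`. -/
theorem dual_suboptimality_coordinate_bound {m p : ℕ}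
    (d : EuclideanSpace ℝ (Fin (m + p)) → ℝ)
    (d' : EuclideanSpace ℝ (Fin (m + p)) → EuclideanSpace ℝ (Fin (m + p)))
    (L : ℝ) (hL : 0 < L)
    (hconc : ConcaveOn ℝ Set.univ d)
    (hgrad : ∀ u, HasGradientAt d (d' u) u)
    (hlip : ∀ u v, ‖d' u - d' v‖ ≤ L * ‖u - v‖)
    (D : Set (EuclideanSpace ℝ (Fin (m + p))))
    (hD : D = {u | ∀ i : Fin (m + p), (i : ℕ) < m → 0 ≤ u i})
    (hbdd : BddAbove (d '' D))
    (u : EuclideanSpace ℝ (Fin (m + p))) (hu : u ∈ D) :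
    sSup (d '' D) - d u ≥
      (1 / 2) * (∑ i ∈ Finset.univ.filter
          (fun i : Fin (m + p) => (i : ℕ) < m ∧ u i + (1 / L) * d' u i < 0),
          (-(d' u i) * u i))
      + (1 / (2 * L)) * (∑ i ∈ Finset.univ.filter
          (fun i : Fin (m + p) => ¬((i : ℕ) < m ∧ u i + (1 / L) * d' u i < 0)),
          (d' u i) ^ 2) := by
  set g : EuclideanSpace ℝ (Fin (m + p)) := d' u with hg
  set act : Fin (m + p) → Prop := fun i => (i : ℕ) < m ∧ u i + (1 / L) * g i < 0 with hact
  set v : EuclideanSpace ℝ (Fin (m + p)) :=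
    WithLp.toLp 2 (fun i => if act i then 0 else u i + (1 / L) * g i) with hv
  have hvi : ∀ i, v i = if act i then 0 else u i + (1 / L) * g i := fun i => rfl
  have hvD : v ∈ D := by
    rw [hD]
    intro i hi
    rw [hvi i]
    by_cases h : act i
    · rw [if_pos h]
    · rw [if_neg h]
      have : ¬ (u i + (1 / L) * g i < 0) := fun hc => h ⟨hi, hc⟩
      linarith [not_lt.mp this]
  set w : EuclideanSpace ℝ (Fin (m + p)) := v - u with hw
  have hwi : ∀ i, w i = if act i then -u i else (1 / L) * g i := by
    intro i
    have h0 : w i = v i - u i := rfl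
    rw [h0, hvi i]
    by_cases h : act i
    · rw [if_pos h, if_pos h]; ring
    · rw [if_neg h, if_neg h]; ring
  have hdes := descent_lemma d d' L hL hgrad hlip u w
  have huw : u + w = v := by rw [hw]; abel
  rw [huw] at hdes
  have hdv : d v ≤ sSup (d '' D) := le_csSup hbdd ⟨v, hvD, rfl⟩
  have hsum : ⟪d' u, w⟫ - L / 2 * ‖w‖ ^ 2
      = ∑ i, (g i * w i - L / 2 * (w i) ^ 2) := by
    rw [← real_inner_self_eq_norm_sq]
    simp only [PiLp.inner_apply, RCLike.inner_apply, conj_trivial, ← hg]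
    rw [Finset.sum_sub_distrib, Finset.mul_sum]
    congr 1
    apply Finset.sum_congr rfl
    intro i _
    ring
    apply Finset.sum_congr rfl
    intro i _
    ring
  have hsplit := (Finset.sum_filter_add_sum_filter_not Finset.univ act
    (fun i => g i * w i - L / 2 * (w i) ^ 2)).symm
  have huD : ∀ i : Fin (m + p), (i : ℕ) < m → 0 ≤ u i := by rw [hD] at hu; exact hu
  have hA : (1 / 2) * (∑ i ∈ Finset.univ.filter act, (-(g i) * u i))
      ≤ ∑ i ∈ Finset.univ.filter act, (g i * w i - L / 2 * (w i) ^ 2) := by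
    rw [Finset.mul_sum]
    apply Finset.sum_le_sum
    intro i hi
    have hai : act i := (Finset.mem_filter.mp hi).2
    have hui : 0 ≤ u i := huD i hai.1
    have hlt : u i + (1 / L) * g i < 0 := hai.2
    have hgi : g i < -(L * u i) := by
      have h1 := mul_lt_mul_of_pos_left hlt hL
      rw [mul_add, mul_zero] at h1
      have hLg : L * ((1 / L) * g i) = g i := by field_simp
      nlinarith
    rw [hwi i, if_pos hai]
    nlinarith [mul_le_mul_of_nonneg_right hgi.le hui]
  have hI : (1 / (2 * L)) * (∑ i ∈ Finset.univ.filter (fun i => ¬ act i), (g i) ^ 2)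
      ≤ ∑ i ∈ Finset.univ.filter (fun i => ¬ act i), (g i * w i - L / 2 * (w i) ^ 2) := by
    rw [Finset.mul_sum]
    apply Finset.sum_le_sum
    intro i hi
    have hai : ¬ act i := (Finset.mem_filter.mp hi).2
    rw [hwi i, if_neg hai]
    have hL' : L ≠ 0 := hL.ne'
    exact le_of_eq (by field_simp; ring)
  have goal' : sSup (d '' D) - d u ≥
      (1 / 2) * (∑ i ∈ Finset.univ.filter act, (-(g i) * u i))
      + (1 / (2 * L)) * (∑ i ∈ Finset.univ.filter (fun i => ¬ act i), (g i) ^ 2) := by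
    linarith [hdes, hdv, hsum, hsplit, hA, hI]
  exact goal'
end

section
/- In the setting of the coordinate-wise projection bound: let d be concave, differentiable with L-Lipschitz gradient, D the dual feasible set (first m coordinates ≥ 0), u ∈ D, d⋆ = sup_D d. Then −⟨∇d(u), u⟩ ≤ 2(d⋆ − d(u)) + ‖u‖_∞ √(2L·q·(d⋆ − d(u))), where q = m + p is the dimension. -/
/-!
Take one projected gradient step from `u`: move to `u + ∇d(u)/L` and clip the constrained
coordinates at `0`. The descent lemma for an `L`-Lipschitz gradient bounds the gain
`d(u + v) - d(u)` of this step from below coordinatewise: a clipped (active) coordinate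
contributes at least `-∇ⁱd(u) uⁱ / 2`, a free one exactly `(∇ⁱd(u))² / (2L)`. Since the
gain is at most `d⋆ - d(u)`, the active part of `-⟪∇d(u), u⟫` is at most `2(d⋆ - d(u))`,
and Cauchy–Schwarz bounds the free part by `‖u‖_∞ √(q · 2L(d⋆ - d(u)))`.
-/

open scoped RealInnerProductSpace
open Finset

section LipschitzGradient

variable {F : Type*} [NormedAddCommGroup F] [InnerProductSpace ℝ F] {f : F → ℝ} {f' : F → F}
  {L : ℝ}

theorem hasDerivAt_comp_add_smul [CompleteSpace F] (hf : ∀ x, HasGradientAt f (f' x) x)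
    (u v : F) (t : ℝ) :
    HasDerivAt (fun s : ℝ => f (u + s • v)) ⟪f' (u + t • v), v⟫ t := by
  have hline : HasDerivAt (fun s : ℝ => u + s • v) v t := by
    simpa using ((hasDerivAt_id t).smul_const v).const_add u
  have := (hf (u + t • v)).hasFDerivAt.comp_hasDerivAt t hline
  simp only [InnerProductSpace.toDual_apply_apply] at this
  exact this

theorem inner_sub_inner_add_smul_le (hlip : ∀ x y, ‖f' x - f' y‖ ≤ L * ‖x - y‖)
    (u v : F) {t : ℝ} (ht : 0 ≤ t) :
    ⟪f' u, v⟫ - ⟪f' (u + t • v), v⟫ ≤ L * t * ‖v‖ ^ 2 :=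
  calc ⟪f' u, v⟫ - ⟪f' (u + t • v), v⟫ = ⟪f' u - f' (u + t • v), v⟫ := (inner_sub_left ..).symm
    _ ≤ ‖f' u - f' (u + t • v)‖ * ‖v‖ := real_inner_le_norm _ _
    _ ≤ L * ‖u - (u + t • v)‖ * ‖v‖ := by gcongr; exact hlip _ _
    _ = L * t * ‖v‖ ^ 2 := by
      rw [sub_add_cancel_left, norm_neg, norm_smul, Real.norm_of_nonneg ht]; ring

theorem add_inner_sub_sq_le_of_lipschitz_gradient [CompleteSpace F]
    (hf : ∀ x, HasGradientAt f (f' x) x) (hlip : ∀ x y, ‖f' x - f' y‖ ≤ L * ‖x - y‖) (u v : F) :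
    f u + ⟪f' u, v⟫ - L / 2 * ‖v‖ ^ 2 ≤ f (u + v) := by
  set ψ : ℝ → ℝ := fun t => f (u + t • v) - t * ⟪f' u, v⟫ + L / 2 * t ^ 2 * ‖v‖ ^ 2
  have hψ : ∀ t, HasDerivAt ψ (⟪f' (u + t • v), v⟫ - ⟪f' u, v⟫ + L * t * ‖v‖ ^ 2) t := by
    intro t
    refine (((hasDerivAt_comp_add_smul hf u v t).sub ((hasDerivAt_id t).mul_const _)).add
      (((hasDerivAt_pow 2 t).const_mul (L / 2)).mul_const (‖v‖ ^ 2))).congr_deriv ?_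
    simp only [one_mul, Nat.cast_ofNat]
    ring
  have hmono : MonotoneOn ψ (Set.Icc 0 1) := by
    refine monotoneOn_of_hasDerivWithinAt_nonneg (convex_Icc 0 1)
      (fun t _ => (hψ t).continuousAt.continuousWithinAt) (fun t _ => (hψ t).hasDerivWithinAt) ?_
    intro t ht
    rw [interior_Icc] at ht
    linarith [inner_sub_inner_add_smul_le hlip u v ht.1.le]
  have := hmono (Set.left_mem_Icc.2 zero_le_one) (Set.right_mem_Icc.2 zero_le_one) zero_le_one
  simp only [ψ, zero_smul, add_zero, zero_mul, sub_zero, one_smul, one_mul, one_pow] at this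
  linarith

end LipschitzGradient

theorem mul_sq_le_neg_mul_of_add_div_neg {L a g : ℝ} (hL : 0 < L) (ha : 0 ≤ a)
    (hact : a + g / L < 0) : L * a ^ 2 ≤ -(g * a) := by
  have hg : g < -(L * a) := by
    have := (div_lt_iff₀ hL).1 (show g / L < -a by linarith)
    linarith
  nlinarith

theorem sum_neg_mul_le_iSup_abs_mul_sqrt {ι : Type*} [Fintype ι] (s : Finset ι)
    (g u : ι → ℝ) :
    ∑ i ∈ s, -(g i * u i) ≤ (⨆ i, |u i|) * √(Fintype.card ι * ∑ i ∈ s, g i ^ 2) := by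
  have hM : ∀ i, |u i| ≤ ⨆ j, |u j| := le_ciSup (Set.finite_range _).bddAbove
  have hCS : (∑ i ∈ s, |g i|) ^ 2 ≤ Fintype.card ι * ∑ i ∈ s, g i ^ 2 :=
    calc (∑ i ∈ s, |g i|) ^ 2 ≤ #s * ∑ i ∈ s, |g i| ^ 2 := sq_sum_le_card_mul_sum_sq
      _ ≤ Fintype.card ι * ∑ i ∈ s, g i ^ 2 := by
        simp only [sq_abs]
        gcongr
        exact_mod_cast card_le_univ s
  calc ∑ i ∈ s, -(g i * u i) ≤ ∑ i ∈ s, |g i| * ⨆ j, |u j| := by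
        gcongr with i
        calc -(g i * u i) ≤ |g i * u i| := neg_le_abs _
          _ = |g i| * |u i| := abs_mul _ _
          _ ≤ |g i| * ⨆ j, |u j| := by gcongr; exact hM i
    _ = (⨆ j, |u j|) * ∑ i ∈ s, |g i| := by rw [← sum_mul, mul_comm]
    _ ≤ (⨆ j, |u j|) * √(Fintype.card ι * ∑ i ∈ s, g i ^ 2) := by
        gcongr
        · exact Real.iSup_nonneg fun _ => abs_nonneg _
        · exact Real.le_sqrt_of_sq_le hCS

theorem inner_eq_sum_mul {ι : Type*} [Fintype ι] (x y : EuclideanSpace ℝ ι) :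
    ⟪x, y⟫ = ∑ i, x i * y i := by
  simp [PiLp.inner_apply, mul_comm]

section ProjectedStep

variable {ι : Type*} [Fintype ι] (P : ι → Prop) [DecidablePred P] (L : ℝ)
  (u g : EuclideanSpace ℝ ι)

/-- The active set `A(u)` of the paper, for `g = ∇d(u)` and the constraints `0 ≤ wⁱ` (`P i`). -/
noncomputable def activeSet : Finset ι := {i | P i ∧ u i + g i / L < 0}

theorem sum_active_nonneg (hL : 0 < L) (hu : ∀ i, P i → 0 ≤ u i) :
    0 ≤ ∑ i ∈ activeSet P L u g, -(g i * u i) := by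
  refine sum_nonneg fun i hi => ?_
  have hi' : P i ∧ u i + g i / L < 0 := by simpa [activeSet] using hi
  exact (by positivity : 0 ≤ L * u i ^ 2).trans
    (mul_sq_le_neg_mul_of_add_div_neg hL (hu i hi'.1) hi'.2)

variable [DecidableEq ι]

/-- `u + projStep P L u g` is the projection of `u + g / L` onto `{w | ∀ i, P i → 0 ≤ wⁱ}`. -/
noncomputable def projStep : EuclideanSpace ℝ ι :=
  WithLp.toLp 2 fun i => if i ∈ activeSet P L u g then -u i else g i / L

theorem projStep_apply (i : ι) :
    projStep P L u g i = if i ∈ activeSet P L u g then -u i else g i / L := rfl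

theorem add_projStep_nonneg {i : ι} (hi : P i) : 0 ≤ (u + projStep P L u g) i := by
  by_cases h : i ∈ activeSet P L u g
  · simp [projStep, h]
  · have : ¬ u i + g i / L < 0 := fun hneg => h (by simpa [activeSet, hi] using hneg)
    simpa [projStep, h] using this

theorem sum_active_add_sum_free_le_gain (hL : 0 < L) (hu : ∀ i, P i → 0 ≤ u i) :
    (∑ i ∈ activeSet P L u g, -(g i * u i)) / 2
        + (∑ i ∈ (activeSet P L u g)ᶜ, g i ^ 2) / (2 * L)
      ≤ ⟪g, projStep P L u g⟫ - L / 2 * ‖projStep P L u g‖ ^ 2 := by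
  set A := activeSet P L u g
  set v := projStep P L u g
  have hgain : ⟪g, v⟫ - L / 2 * ‖v‖ ^ 2 = ∑ i, (g i * v i - L / 2 * v i ^ 2) := by
    simp only [inner_eq_sum_mul, EuclideanSpace.norm_sq_eq, Real.norm_eq_abs, sq_abs, mul_sum,
      sum_sub_distrib]
  rw [hgain, ← sum_add_sum_compl A, sum_div, sum_div]
  gcongr with i hi i hi
  · have hi' : P i ∧ u i + g i / L < 0 := by simpa [A, activeSet] using hi
    have := mul_sq_le_neg_mul_of_add_div_neg hL (hu i hi'.1) hi'.2
    rw [projStep_apply, if_pos hi]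
    nlinarith
  · rw [projStep_apply, if_neg (mem_compl.1 hi)]
    apply le_of_eq
    field_simp
    ring

theorem sum_active_add_sum_free_le_optimality_gap {f : EuclideanSpace ℝ ι → ℝ}
    {f' : EuclideanSpace ℝ ι → EuclideanSpace ℝ ι} {c : ℝ} (hL : 0 < L)
    (hf : ∀ x, HasGradientAt f (f' x) x) (hlip : ∀ x y, ‖f' x - f' y‖ ≤ L * ‖x - y‖)
    (hc : ∀ w : EuclideanSpace ℝ ι, (∀ i, P i → 0 ≤ w i) → f w ≤ c) (hu : ∀ i, P i → 0 ≤ u i) :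
    (∑ i ∈ activeSet P L u (f' u), -(f' u i * u i)) / 2
        + (∑ i ∈ (activeSet P L u (f' u))ᶜ, f' u i ^ 2) / (2 * L) ≤ c - f u := by
  have hdescent := add_inner_sub_sq_le_of_lipschitz_gradient hf hlip u (projStep P L u (f' u))
  have hfeasible := hc _ fun i hi => add_projStep_nonneg P L u (f' u) hi
  linarith [sum_active_add_sum_free_le_gain P L u (f' u) hL hu]

end ProjectedStep

theorem neg_grad_inner_bound_general {m p : ℕ}
    (d : EuclideanSpace ℝ (Fin (m + p)) → ℝ)
    (d' : EuclideanSpace ℝ (Fin (m + p)) → EuclideanSpace ℝ (Fin (m + p)))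
    (L : ℝ) (hL : 0 < L)
    (hgrad : ∀ u, HasGradientAt d (d' u) u)
    (hlip : ∀ u v, ‖d' u - d' v‖ ≤ L * ‖u - v‖)
    (D : Set (EuclideanSpace ℝ (Fin (m + p))))
    (hD : D = {u | ∀ i : Fin (m + p), (i : ℕ) < m → 0 ≤ u i})
    (hbdd : BddAbove (d '' D))
    (u : EuclideanSpace ℝ (Fin (m + p))) (hu : u ∈ D) :
    -⟪d' u, u⟫ ≤ 2 * (sSup (d '' D) - d u)
      + (⨆ i : Fin (m + p), |u i|) *
        Real.sqrt (2 * L * (m + p) * (sSup (d '' D) - d u)) := by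
  subst hD
  set A := activeSet (fun i : Fin (m + p) => (i : ℕ) < m) L u (d' u)
  set gap := sSup (d '' {u | ∀ i : Fin (m + p), (i : ℕ) < m → 0 ≤ u i}) - d u
  have hgap := sum_active_add_sum_free_le_optimality_gap _ L u hL hgrad hlip
    (fun w hw => le_csSup hbdd ⟨w, hw, rfl⟩) hu
  have hA0 := sum_active_nonneg _ L u (d' u) hL hu
  have hfree0 : 0 ≤ ∑ i ∈ Aᶜ, d' u i ^ 2 := sum_nonneg fun i _ => sq_nonneg _
  have hA : ∑ i ∈ A, -(d' u i * u i) ≤ 2 * gap := by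
    linarith [div_nonneg hfree0 (by positivity : (0 : ℝ) ≤ 2 * L)]
  have hfree : ∑ i ∈ Aᶜ, d' u i ^ 2 ≤ 2 * L * gap := by
    rw [← div_le_iff₀' (by positivity)]
    linarith
  calc -⟪d' u, u⟫ = ∑ i ∈ A, -(d' u i * u i) + ∑ i ∈ Aᶜ, -(d' u i * u i) := by
        rw [sum_add_sum_compl, inner_eq_sum_mul, sum_neg_distrib]
    _ ≤ 2 * gap + (⨆ i, |u i|) * √(Fintype.card (Fin (m + p)) * ∑ i ∈ Aᶜ, d' u i ^ 2) :=
        add_le_add hA (sum_neg_mul_le_iSup_abs_mul_sqrt _ _ _)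
    _ ≤ 2 * gap + (⨆ i, |u i|) * √(2 * L * (m + p) * gap) := by
        refine add_le_add_right (mul_le_mul_of_nonneg_left (Real.sqrt_le_sqrt ?_)
          (Real.iSup_nonneg fun _ => abs_nonneg _)) _
        rw [Fintype.card_fin, Nat.cast_add, mul_comm (2 * L), mul_assoc]
        gcongr

/-- For concave `d` with `L`-Lipschitz gradient and dual feasible set `D`
(first `m` coordinates nonnegative) in dimension `q = m + p`, for `u ∈ D`:
`−⟪∇d(u), u⟫ ≤ 2(d⋆ − d(u)) + ‖u‖_∞ √(2·L·q·(d⋆ − d(u)))`. -/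
theorem neg_grad_inner_bound {m p : ℕ}
    (d : EuclideanSpace ℝ (Fin (m + p)) → ℝ)
    (d' : EuclideanSpace ℝ (Fin (m + p)) → EuclideanSpace ℝ (Fin (m + p)))
    (L : ℝ) (hL : 0 < L)
    (hconc : ConcaveOn ℝ Set.univ d)
    (hgrad : ∀ u, HasGradientAt d (d' u) u)
    (hlip : ∀ u v, ‖d' u - d' v‖ ≤ L * ‖u - v‖)
    (D : Set (EuclideanSpace ℝ (Fin (m + p))))
    (hD : D = {u | ∀ i : Fin (m + p), (i : ℕ) < m → 0 ≤ u i})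
    (hbdd : BddAbove (d '' D))
    (u : EuclideanSpace ℝ (Fin (m + p))) (hu : u ∈ D) :
    -⟪d' u, u⟫ ≤ 2 * (sSup (d '' D) - d u)
      + (⨆ i : Fin (m + p), |u i|) *
        Real.sqrt (2 * L * (m + p) * (sSup (d '' D) - d u)) :=
  neg_grad_inner_bound_general d d' L hL hgrad hlip D hD hbdd u hu
end

section
/- Let the primal problem have optimal value f⋆ with optimal dual multiplier u⋆ ∈ D (first m components ≥ 0), where f⋆ = L(x̄(u⋆), u⋆) = min_{x∈X} L(x, u⋆). For any dual feasible u and the Lagrangian minimizer x̄(u) ∈ X, f(x̄(u)) − f⋆ ≥ −‖u⋆‖ · Δ(x̄(u)), where Δ(x) = (‖Ax+b‖² + ∑_{i=1}^m max{0, g⁽ⁱ⁾(x)}²)^{1/2} is the infeasibility measure. -/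
/-!
Evaluate the Lagrangian at the dual optimum `(μ⋆, λ⋆)` in `x̄`: since `f⋆` minimises it over `X`,
`f(x̄) − f⋆ ≥ −(∑ᵢ μ⋆ᵢ gᵢ(x̄) + ⟪λ⋆, Ax̄ + b⟫)`. As `μ⋆ ≥ 0`, each `gᵢ(x̄)` may be replaced by its
positive part, and the two resulting inner products are bounded jointly by Cauchy–Schwarz in the
Hilbert sum `ℝᵐ × ℝᵖ`, whose norms are `‖u⋆‖` and `Δ(x̄)`.
-/

open scoped RealInnerProductSpace

section CauchySchwarz

variable {E F : Type*} [NormedAddCommGroup E] [InnerProductSpace ℝ E]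
  [NormedAddCommGroup F] [InnerProductSpace ℝ F]

theorem real_inner_add_real_inner_le_sqrt_mul_sqrt (x₁ y₁ : E) (x₂ y₂ : F) :
    ⟪x₁, y₁⟫ + ⟪x₂, y₂⟫ ≤ √(‖x₁‖ ^ 2 + ‖x₂‖ ^ 2) * √(‖y₁‖ ^ 2 + ‖y₂‖ ^ 2) := by
  simpa only [WithLp.prod_inner_apply, WithLp.prod_norm_eq_of_L2, WithLp.toLp_fst,
    WithLp.toLp_snd] using
    real_inner_le_norm (WithLp.toLp 2 (x₁, x₂)) (WithLp.toLp 2 (y₁, y₂))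

end CauchySchwarz

namespace EuclideanSpace

variable {ι : Type*} [Fintype ι]

theorem sum_mul_le_inner_max_zero {μ : EuclideanSpace ℝ ι} (hμ : ∀ i, 0 ≤ μ i) (y : ι → ℝ) :
    ∑ i, μ i * y i ≤ ⟪μ, WithLp.toLp 2 fun i ↦ max 0 (y i)⟫ := by
  rw [real_inner_comm, PiLp.inner_apply]
  gcongr with i
  simp only [RCLike.inner_apply, conj_trivial]
  exact mul_le_mul_of_nonneg_left (le_max_right _ _) (hμ i)

end EuclideanSpace

theorem primal_suboptimality_lower_bound_general {n m p : ℕ}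
    (X : Set (EuclideanSpace ℝ (Fin n)))
    (f : EuclideanSpace ℝ (Fin n) → ℝ)
    (g : Fin m → EuclideanSpace ℝ (Fin n) → ℝ)
    (A : EuclideanSpace ℝ (Fin n) →L[ℝ] EuclideanSpace ℝ (Fin p))
    (b : EuclideanSpace ℝ (Fin p))
    (μs : EuclideanSpace ℝ (Fin m)) (lams : EuclideanSpace ℝ (Fin p))
    (fstar : ℝ)
    (hμs : ∀ i, 0 ≤ μs i)
    -- `f⋆ = min_{x ∈ X} L(x, u⋆)`
    (hfstar : ∀ x ∈ X, fstar ≤ f x + (∑ i, μs i * g i x) + ⟪lams, A x + b⟫)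
    (xb : EuclideanSpace ℝ (Fin n)) (hxb : xb ∈ X) :
    f xb - fstar ≥ -(Real.sqrt (‖μs‖ ^ 2 + ‖lams‖ ^ 2)) *
      Real.sqrt (‖A xb + b‖ ^ 2 + ∑ i, (max 0 (g i xb)) ^ 2) := by
  set viol : EuclideanSpace ℝ (Fin m) := WithLp.toLp 2 fun i ↦ max 0 (g i xb)
  have hpenalty : ∑ i, μs i * g i xb ≤ ⟪μs, viol⟫ :=
    EuclideanSpace.sum_mul_le_inner_max_zero hμs _
  have hcs := real_inner_add_real_inner_le_sqrt_mul_sqrt μs viol lams (A xb + b)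
  have hviol : ‖viol‖ ^ 2 = ∑ i, (max 0 (g i xb)) ^ 2 :=
    EuclideanSpace.real_norm_sq_eq _
  rw [hviol, add_comm (∑ i, _)] at hcs
  linarith [hfstar xb hxb]

/-- Lower bound on primal suboptimality via infeasibility: with dual optimum
`u⋆ = (μ⋆, λ⋆)` (μ⋆ ≥ 0) such that `f⋆ = min_{x∈X} L(x, u⋆)`, for any `x̄ ∈ X`:
`f(x̄) − f⋆ ≥ −‖u⋆‖·Δ(x̄)` where
`Δ(x) = √(‖Ax+b‖² + ∑ᵢ max{0, g⁽ⁱ⁾(x)}²)` and `‖u⋆‖ = √(‖μ⋆‖² + ‖λ⋆‖²)`. -/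
theorem primal_suboptimality_lower_bound {n m p : ℕ}
    (X : Set (EuclideanSpace ℝ (Fin n)))
    (f : EuclideanSpace ℝ (Fin n) → ℝ)
    (g : Fin m → EuclideanSpace ℝ (Fin n) → ℝ)
    (A : EuclideanSpace ℝ (Fin n) →L[ℝ] EuclideanSpace ℝ (Fin p))
    (b : EuclideanSpace ℝ (Fin p))
    (μs : EuclideanSpace ℝ (Fin m)) (lams : EuclideanSpace ℝ (Fin p))
    (fstar : ℝ)
    (hμs : ∀ i, 0 ≤ μs i)
    -- `f⋆ = min_{x ∈ X} L(x, u⋆)`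
    (hfstar : ∀ x ∈ X, fstar ≤ f x + (∑ i, μs i * g i x) + ⟪lams, A x + b⟫)
    (hattain : ∃ xs ∈ X, fstar = f xs + (∑ i, μs i * g i xs) + ⟪lams, A xs + b⟫)
    (xb : EuclideanSpace ℝ (Fin n)) (hxb : xb ∈ X) :
    f xb - fstar ≥ -(Real.sqrt (‖μs‖ ^ 2 + ‖lams‖ ^ 2)) *
      Real.sqrt (‖A xb + b‖ ^ 2 + ∑ i, (max 0 (g i xb)) ^ 2) :=
  primal_suboptimality_lower_bound_general X f g A b μs lams fstar hμs hfstar xb hxb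
end

section
/- Let Ã ∈ ℝ^{q×n}, b̃ ∈ ℝ^q encode constraints Ãx + b̃ ≤/= 0 split into m inequality rows and p equality rows. Let d be the dual function of the linearly constrained strongly convex problem with parameter θ, x̄(u) its Lagrangian minimizer, x⋆ the primal optimum and u⋆ a dual optimum (d(u⋆) = d⋆ = f⋆). Then for every dual feasible u, Δ(x̄(u)) ≤ σ_max(Ã)·√(2(d⋆ − d(u))/θ), where Δ(x) = (‖(Ãx+b̃)_equality‖² + ∑_inequality max{0, (Ãx+b̃)⁽ⁱ⁾}²)^{1/2}. -/
open scoped RealInnerProductSpace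

section Aux

variable {E : Type*} [NormedAddCommGroup E] [InnerProductSpace ℝ E] [CompleteSpace E]

/-- Derivative of a function along a line, from its gradient. -/
lemma aux_line_hasDerivAt (φ : E → ℝ) (G x v : E) (t : ℝ)
    (hg : HasGradientAt φ G (x + t • v)) :
    HasDerivAt (fun s : ℝ => φ (x + s • v)) ⟪G, v⟫ t := by
  have h1 : HasDerivAt (fun s : ℝ => x + s • v) v t := by
    simpa using ((hasDerivAt_id t).smul_const v).const_add x
  have h2 := hg.hasFDerivAt
  have := h2.comp_hasDerivAt t h1
  exact this

/-- Descent lemma: a function with `L`-Lipschitz gradient satisfies the quadratic lower bound. -/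
lemma aux_descent (φ : E → ℝ) (G : E → E) (L : ℝ) (hL : 0 ≤ L)
    (hg : ∀ z, HasGradientAt φ (G z) z)
    (hlip : ∀ a b, ‖G a - G b‖ ≤ L * ‖a - b‖) (x y : E) :
    φ x + ⟪G x, y - x⟫ - L / 2 * ‖y - x‖ ^ 2 ≤ φ y := by
  set v := y - x with hv
  set Ψ : ℝ → ℝ := fun t => φ (x + t • v) - t * ⟪G x, v⟫ + L / 2 * t ^ 2 * ‖v‖ ^ 2 with hΨ
  have hderiv : ∀ t : ℝ, HasDerivAt Ψ
      (⟪G (x + t • v), v⟫ - ⟪G x, v⟫ + L * t * ‖v‖ ^ 2) t := by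
    intro t
    have h1 := aux_line_hasDerivAt φ (G (x + t • v)) x v t (hg (x + t • v))
    have h2 : HasDerivAt (fun s : ℝ => s * ⟪G x, v⟫) ⟪G x, v⟫ t := by
      simpa using (hasDerivAt_id t).mul_const ⟪G x, v⟫
    have h3 : HasDerivAt (fun s : ℝ => L / 2 * s ^ 2 * ‖v‖ ^ 2) (L * t * ‖v‖ ^ 2) t := by
      have : HasDerivAt (fun s : ℝ => s ^ 2) (2 * t) t := by
        simpa using hasDerivAt_pow 2 t
      have := (this.const_mul (L / 2)).mul_const (‖v‖ ^ 2)
      exact this.congr_deriv (by ring)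
    have := (h1.sub h2).add h3
    exact this
  have hmono : MonotoneOn Ψ (Set.Icc 0 1) := by
    apply monotoneOn_of_deriv_nonneg (convex_Icc 0 1)
    · exact Continuous.continuousOn (continuous_iff_continuousAt.mpr
        fun t => (hderiv t).differentiableAt.continuousAt)
    · intro t _
      exact (hderiv t).differentiableAt.differentiableWithinAt
    · intro t ht
      rw [interior_Icc] at ht
      rw [(hderiv t).deriv]
      have hb : ⟪G x - G (x + t • v), v⟫ ≤ L * t * ‖v‖ ^ 2 := by
        calc ⟪G x - G (x + t • v), v⟫ ≤ ‖G x - G (x + t • v)‖ * ‖v‖ :=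
              real_inner_le_norm _ _
          _ ≤ (L * ‖x - (x + t • v)‖) * ‖v‖ := by
              have := hlip x (x + t • v)
              nlinarith [norm_nonneg v]
          _ = L * t * ‖v‖ ^ 2 := by
              have : ‖x - (x + t • v)‖ = t * ‖v‖ := by
                rw [show x - (x + t • v) = -(t • v) by abel, norm_neg, norm_smul,
                  Real.norm_eq_abs, abs_of_pos ht.1]
              rw [this]; ring
      have : ⟪G x - G (x + t • v), v⟫ = ⟪G x, v⟫ - ⟪G (x + t • v), v⟫ := by
        rw [inner_sub_left]
      linarith
  have h01 := hmono (Set.mem_Icc.mpr ⟨le_refl 0, zero_le_one⟩)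
    (Set.mem_Icc.mpr ⟨zero_le_one, le_refl 1⟩) zero_le_one
  have hΨ0 : Ψ 0 = φ x := by simp [Ψ]
  have hΨ1 : Ψ 1 = φ y - ⟪G x, v⟫ + L / 2 * ‖v‖ ^ 2 := by
    simp [Ψ, hv]
  rw [hΨ0, hΨ1] at h01
  linarith

/-- A concave function with zero gradient at a point attains its maximum there. -/
lemma aux_max (h : E → ℝ) (hc : ConcaveOn ℝ Set.univ h) (w : E)
    (h0 : HasGradientAt h 0 w) (y : E) : h y ≤ h w := by
  set ψ : ℝ → ℝ := fun t => h (w + t • (y - w)) with hψ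
  have hψc : ConcaveOn ℝ Set.univ ψ := by
    have := hc.comp_affineMap (AffineMap.lineMap w y : ℝ →ᵃ[ℝ] E)
    have heq : ψ = h ∘ (AffineMap.lineMap w y : ℝ →ᵃ[ℝ] E) := by
      funext t
      simp [ψ, AffineMap.lineMap_apply, add_comm]
    rw [heq]
    simpa using this
  have hd : HasDerivAt ψ 0 0 := by
    have := aux_line_hasDerivAt h 0 w (y - w) 0 (by simpa using h0)
    simpa using this
  have := hψc.slope_le_of_hasDerivAt (Set.mem_univ (0:ℝ)) (Set.mem_univ (1:ℝ))
    zero_lt_one hd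
  have hs : slope ψ 0 1 = ψ 1 - ψ 0 := by
    simp [slope_def_field]
  rw [hs] at this
  have h1 : ψ 1 = h y := by simp [ψ]
  have h0' : ψ 0 = h w := by simp [ψ]
  linarith [this]

end Aux

set_option maxHeartbeats 1000000 in
/-- Infeasibility bound for the linearly constrained problem:
`Δ(x̄(u)) ≤ σ_max(Ã)·√(2(d⋆ − d(u))/θ)` for every dual feasible `u`, where the first
`m` rows of `Ãx + b̃` are inequality constraints and the remaining `p` rows equalities,
and `σ_max(Ã)` is the operator norm of `Ã`. -/
theorem infeasibility_bound_linear {n m p : ℕ}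
    (X : Set (EuclideanSpace ℝ (Fin n))) (hXcl : IsClosed X) (hXcv : Convex ℝ X)
    (f : EuclideanSpace ℝ (Fin n) → ℝ) (θ : ℝ) (hθ : 0 < θ)
    (At : EuclideanSpace ℝ (Fin n) →L[ℝ] EuclideanSpace ℝ (Fin (m + p)))
    (bt : EuclideanSpace ℝ (Fin (m + p)))
    (d : EuclideanSpace ℝ (Fin (m + p)) → ℝ)
    (xbar : EuclideanSpace ℝ (Fin (m + p)) → EuclideanSpace ℝ (Fin n))
    (xstar : EuclideanSpace ℝ (Fin n))
    (D : Set (EuclideanSpace ℝ (Fin (m + p))))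
    (hD : D = {u | ∀ i : Fin (m + p), (i : ℕ) < m → 0 ≤ u i})
    (hconc : ConcaveOn ℝ Set.univ d)
    -- `∇d(u) = Ãx̄(u) + b̃`
    (hgrad : ∀ u, HasGradientAt d (At (xbar u) + bt) u)
    -- `∇d` is Lipschitz with constant `σ_max(Ã)²/θ`
    (hlip : ∀ u v, ‖(At (xbar u) + bt) - (At (xbar v) + bt)‖ ≤ ‖At‖ ^ 2 / θ * ‖u - v‖)
    (ustar : EuclideanSpace ℝ (Fin (m + p))) (hustar : ustar ∈ D)
    (dstar : ℝ) (hds : d ustar = dstar) (hub : ∀ v ∈ D, d v ≤ dstar)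
    -- `x̄(u⋆) = x⋆` is primal feasible
    (hxs : xbar ustar = xstar)
    (hfeas : ∀ i : Fin (m + p),
      ((i : ℕ) < m → (At xstar + bt) i ≤ 0) ∧ (m ≤ (i : ℕ) → (At xstar + bt) i = 0)) :
    ∀ u ∈ D,
      Real.sqrt (∑ i : Fin (m + p),
        (if (i : ℕ) < m then max 0 ((At (xbar u) + bt) i) else (At (xbar u) + bt) i) ^ 2)
      ≤ ‖At‖ * Real.sqrt (2 * (dstar - d u) / θ) := by
  intro u hu
  set g : EuclideanSpace ℝ (Fin (m + p)) → EuclideanSpace ℝ (Fin (m + p)) :=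
    fun v => At (xbar v) + bt with hg
  set s : EuclideanSpace ℝ (Fin (m + p)) := At xstar + bt with hsdef
  have hgs : g ustar = s := by simp only [hg, hsdef, hxs]
  set L : ℝ := ‖At‖ ^ 2 / θ with hL
  have hLnn : 0 ≤ L := div_nonneg (sq_nonneg _) hθ.le
  -- Step 1: Δ(x̄(u))² ≤ ‖g u − s‖²
  have hstep1 : Real.sqrt (∑ i : Fin (m + p),
      (if (i : ℕ) < m then max 0 ((At (xbar u) + bt) i) else (At (xbar u) + bt) i) ^ 2)
      ≤ ‖g u - s‖ := by
    have hnorm : ‖g u - s‖ = Real.sqrt (∑ i : Fin (m + p), ((g u) i - s i) ^ 2) := by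
      rw [EuclideanSpace.norm_eq]
      congr 1
      apply Finset.sum_congr rfl
      intro i _
      rw [PiLp.sub_apply, Real.norm_eq_abs, sq_abs]
    rw [hnorm]
    apply Real.sqrt_le_sqrt
    apply Finset.sum_le_sum
    intro i _
    by_cases him : (i : ℕ) < m
    · simp only [him, if_true]
      have hsle : s i ≤ 0 := (hfeas i).1 him
      rcases le_or_gt ((At (xbar u) + bt) i) 0 with hle | hlt
      · rw [max_eq_left hle]
        have : (g u) i = (At (xbar u) + bt) i := rfl
        nlinarith [sq_nonneg ((g u) i - s i)]
      · rw [max_eq_right hlt.le]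
        have : (g u) i = (At (xbar u) + bt) i := rfl
        nlinarith
    · simp only [him, if_false]
      have hseq : s i = 0 := (hfeas i).2 (le_of_not_gt him)
      have heq : (g u) i = (At (xbar u) + bt) i := rfl
      rw [← heq, hseq, sub_zero]
  -- first-order optimality: ⟪g u⋆, u − u⋆⟫ ≤ 0
  have hfoc : ⟪g ustar, u - ustar⟫ ≤ 0 := by
    set ψ : ℝ → ℝ := fun t => d (ustar + t • (u - ustar)) with hψ
    have hderiv : HasDerivAt ψ ⟪g ustar, u - ustar⟫ 0 := by
      have := aux_line_hasDerivAt d (g ustar) ustar (u - ustar) 0 (by simpa using hgrad ustar)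
      simpa [ψ] using this
    have hfeas' : ∀ t ∈ Set.Ioo (0:ℝ) 1, ψ t ≤ ψ 0 := by
      intro t ht
      have hmem : ustar + t • (u - ustar) ∈ D := by
        rw [hD]
        intro i hi
        have h1 : 0 ≤ ustar i := by rw [hD] at hustar; exact hustar i hi
        have h2 : 0 ≤ u i := by rw [hD] at hu; exact hu i hi
        have : (ustar + t • (u - ustar)) i = ustar i + t * (u i - ustar i) := by
          simp [PiLp.add_apply, PiLp.smul_apply, PiLp.sub_apply, smul_eq_mul]
        rw [this]
        nlinarith [ht.1.le, ht.2.le]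
      have := hub _ hmem
      simp only [ψ]
      rw [show ustar + (0:ℝ) • (u - ustar) = ustar by simp, hds]
      exact this
    have htend : Filter.Tendsto (slope ψ 0) (nhdsWithin 0 (Set.Ioi 0))
        (nhds ⟪g ustar, u - ustar⟫) := by
      have := hasDerivAt_iff_tendsto_slope.mp hderiv
      exact this.mono_left (nhdsWithin_mono 0 (fun x hx => Set.mem_compl_singleton_iff.mpr
        (ne_of_gt hx)))
    refine le_of_tendsto htend ?_
    filter_upwards [Ioo_mem_nhdsGT_of_mem (Set.mem_Ico.mpr ⟨le_refl (0:ℝ), zero_lt_one⟩)]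
      with t ht
    rw [slope_def_field]
    have hψt := hfeas' t ht
    have ht0 : (0:ℝ) < t := ht.1
    rw [div_nonpos_iff]
    right
    constructor
    · simpa using hψt
    · simpa using ht0.le
  -- Main bound: ‖g u − g u⋆‖² ≤ 2 L (d⋆ − d u)
  have hgap : 0 ≤ dstar - d u := by linarith [hub u hu]
  have hkey : ‖g u - g ustar‖ ^ 2 ≤ 2 * L * (dstar - d u) := by
    rcases eq_or_lt_of_le hLnn with hL0 | hLpos
    · have := hlip u ustar
      rw [← hL0] at this
      simp only [zero_mul] at this
      have hz0 : ‖g u - g ustar‖ ≤ 0 := this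
      have hz : ‖g u - g ustar‖ = 0 := le_antisymm hz0 (norm_nonneg _)
      rw [hz]
      have : 0 ≤ 2 * L * (dstar - d u) := mul_nonneg (mul_nonneg (by norm_num) hLnn) hgap
      nlinarith
    · -- define h v = d v − ⟪g u⋆, v⟫ with gradient g v − g u⋆
      set c := g ustar with hc
      set h : EuclideanSpace ℝ (Fin (m + p)) → ℝ := fun v => d v - ⟪c, v⟫ with hh
      have hhg : ∀ v, HasGradientAt h (g v - c) v := by
        intro v
        have h1 := (hgrad v).hasFDerivAt
        have h2 : HasFDerivAt (fun w : EuclideanSpace ℝ (Fin (m + p)) => ⟪c, w⟫) (InnerProductSpace.toDual ℝ (EuclideanSpace ℝ (Fin (m + p))) c) v := by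
          exact (InnerProductSpace.toDual ℝ (EuclideanSpace ℝ (Fin (m + p))) c).hasFDerivAt
        have h3 := h1.sub h2
        rw [hasGradientAt_iff_hasFDerivAt, map_sub]
        exact h3
      have hhc : ConcaveOn ℝ Set.univ h := by
        refine ⟨convex_univ, ?_⟩
        intro x _ y _ a b ha hb hab
        have hd2 := hconc.2 (Set.mem_univ x) (Set.mem_univ y) ha hb hab
        simp only [h, smul_eq_mul]
        rw [inner_add_right, real_inner_smul_right, real_inner_smul_right]
        simp only [smul_eq_mul] at hd2
        linarith
      have hhlip : ∀ a b : EuclideanSpace ℝ (Fin (m + p)), ‖(g a - c) - (g b - c)‖ ≤ L * ‖a - b‖ := by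
        intro a b
        have : (g a - c) - (g b - c) = g a - g b := by abel
        rw [this]
        exact hlip a b
      -- max of h is at ustar
      have hmax : ∀ y, h y ≤ h ustar := by
        intro y
        apply aux_max h hhc ustar _ y
        have : g ustar - c = 0 := by rw [hc]; abel
        rw [← this]
        exact hhg ustar
      -- apply descent at x = u, y = u + (1/L) • (g u − c)
      set w := g u - c with hw
      have hdes := aux_descent h (fun v => g v - c) L hLnn hhg hhlip u (u + (1/L) • w)
      have hzu : (u + (1/L) • w) - u = (1/L) • w := by abel
      rw [hzu] at hdes
      have hi : ⟪g u - c, (1/L) • w⟫ = (1/L) * ‖w‖ ^ 2 := by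
        rw [real_inner_smul_right, ← hw, real_inner_self_eq_norm_sq]
      have hn : ‖(1/L) • w‖ ^ 2 = (1/L) ^ 2 * ‖w‖ ^ 2 := by
        rw [norm_smul, Real.norm_eq_abs, mul_pow, sq_abs]
      rw [hi, hn] at hdes
      have hmax' := hmax (u + (1/L) • w)
      have hLne : L ≠ 0 := ne_of_gt hLpos
      have hchain : h u + ‖w‖ ^ 2 / (2 * L) ≤ h ustar := by
        have : (1/L) * ‖w‖ ^ 2 - L / 2 * ((1/L) ^ 2 * ‖w‖ ^ 2) = ‖w‖ ^ 2 / (2 * L) := by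
          field_simp
          ring
        linarith [hdes, hmax']
      -- h ustar − h u = (dstar − d u) + ⟪c, u − ustar⟫ ≤ dstar − d u
      have hhu : h ustar - h u = (dstar - d u) + ⟪c, u - ustar⟫ := by
        simp only [h]
        rw [inner_sub_right]
        rw [hds]
        ring
      have : ‖w‖ ^ 2 / (2 * L) ≤ dstar - d u := by
        have hfoc' : ⟪c, u - ustar⟫ ≤ 0 := hfoc
        have e1 : ‖w‖ ^ 2 / (2 * L) ≤ h ustar - h u := by linarith
        rw [hhu] at e1
        linarith
      have h2L : (0:ℝ) < 2 * L := by linarith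
      calc ‖g u - g ustar‖ ^ 2 = ‖w‖ ^ 2 := by rw [hw, hc]
        _ ≤ 2 * L * (dstar - d u) := by
            rw [div_le_iff₀ h2L] at this
            linarith [this]
  -- conclude
  have hrhs : ‖At‖ * Real.sqrt (2 * (dstar - d u) / θ) =
      Real.sqrt (2 * L * (dstar - d u)) := by
    rw [hL]
    rw [show 2 * (‖At‖ ^ 2 / θ) * (dstar - d u) = ‖At‖ ^ 2 * (2 * (dstar - d u) / θ) by
      field_simp]
    rw [Real.sqrt_mul (sq_nonneg _), Real.sqrt_sq (norm_nonneg _)]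
  rw [hrhs]
  calc Real.sqrt (∑ i : Fin (m + p),
        (if (i : ℕ) < m then max 0 ((At (xbar u) + bt) i) else (At (xbar u) + bt) i) ^ 2)
      ≤ ‖g u - s‖ := hstep1
    _ ≤ Real.sqrt (2 * L * (dstar - d u)) := by
        rw [← hgs]
        rw [← Real.sqrt_sq (norm_nonneg (g u - g ustar))]
        exact Real.sqrt_le_sqrt hkey
end

section
/- In the linearly constrained setting: f strongly convex with parameter θ on closed convex X, Ã = [A'; A], dual function d with ∇d(u) = Ãx̄(u) + b̃ Lipschitz with constant σ_max(Ã)²/θ, dual optimum u⋆ with ∇d(u⋆)ᵀu⋆ = 0 and ⟨∇d(u⋆), u − u⋆⟩ ≤ 0 for dual feasible u. Then for every dual feasible u: f(x̄(u)) − f⋆ ≤ ‖u‖·σ_max(Ã)·√(2(d⋆ − d(u))/θ). -/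
open scoped RealInnerProductSpace

/-!
Write `g = ∇d` and `L = σ_max(Ã)²/θ`. Concavity and complementary slackness give
`d(u) ≤ d⋆ + ⟪g(u⋆), u⟫`, so `f(x̄(u)) − f⋆ ≤ ⟪g(u⋆) − g(u), u⟫ ≤ ‖u‖ ‖g(u) − g(u⋆)‖`.
The gradient gap is controlled by co-coercivity: comparing the descent-lemma lower bound at the
gradient step `x + L⁻¹ (g x − g y)` with the concavity upper bound at `y` gives
`‖g x − g y‖² ≤ 2L (d y + ⟪g y, x − y⟫ − d x)`, and first-order optimality at `u⋆` bounds the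
right-hand side by `2L (d⋆ − d(u))`.
-/

open Set AffineMap

variable {E : Type*} [NormedAddCommGroup E] [InnerProductSpace ℝ E] [CompleteSpace E]
  {d : E → ℝ} {g : E → E} {L : ℝ}

theorem HasGradientAt.hasDerivAt_comp_lineMap {G x y : E} {t : ℝ}
    (hd : HasGradientAt d G (lineMap x y t)) :
    HasDerivAt (fun s : ℝ => d (lineMap x y s)) ⟪G, y - x⟫ t := by
  simpa [Function.comp_def] using hd.hasFDerivAt.comp_hasDerivAt t hasDerivAt_lineMap

theorem ConcaveOn.le_add_inner_of_hasGradientAt (hconc : ConcaveOn ℝ univ d) {G x : E}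
    (hd : HasGradientAt d G x) (y : E) : d y ≤ d x + ⟪G, y - x⟫ := by
  have hline : ConcaveOn ℝ univ (fun s : ℝ => d (lineMap x y s)) :=
    hconc.comp_affineMap (lineMap x y)
  have hderiv := HasGradientAt.hasDerivAt_comp_lineMap (t := 0) (y := y) (by simpa using hd)
  have hslope := hline.slope_le_of_hasDerivAt (mem_univ 0) (mem_univ 1) zero_lt_one hderiv
  simp only [slope_def_field, lineMap_apply_one, lineMap_apply_zero, sub_zero, div_one] at hslope
  linarith

theorem add_inner_sub_le_of_lipschitz_gradient (hgrad : ∀ u, HasGradientAt d (g u) u)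
    (hlip : ∀ u v, ‖g u - g v‖ ≤ L * ‖u - v‖) (x y : E) :
    d x + ⟪g x, y - x⟫ - L / 2 * ‖y - x‖ ^ 2 ≤ d y := by
  set h : ℝ → ℝ := fun t => d (lineMap x y t) - t * ⟪g x, y - x⟫ + t ^ 2 * (L / 2 * ‖y - x‖ ^ 2)
  have hderiv (t : ℝ) : HasDerivAt h
      (⟪g (lineMap x y t), y - x⟫ - ⟪g x, y - x⟫ + 2 * t * (L / 2 * ‖y - x‖ ^ 2)) t := by
    refine ((((hgrad _).hasDerivAt_comp_lineMap).sub (hasDerivAt_mul_const _)).add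
      ((hasDerivAt_pow 2 t).mul_const _)).congr_deriv ?_
    norm_num
  have hmono : MonotoneOn h (Icc 0 1) := by
    refine monotoneOn_of_hasDerivWithinAt_nonneg (convex_Icc 0 1)
      (fun t _ => (hderiv t).continuousAt.continuousWithinAt)
      (fun t _ => (hderiv t).hasDerivWithinAt) fun t ht => ?_
    rw [interior_Icc] at ht
    have hstep : ‖g (lineMap x y t) - g x‖ ≤ L * (t * ‖y - x‖) := by
      simpa [lineMap_apply_module', norm_smul, abs_of_pos ht.1] using hlip (lineMap x y t) x
    have hinner : -(L * (t * ‖y - x‖) * ‖y - x‖) ≤ ⟪g (lineMap x y t) - g x, y - x⟫ := by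
      refine neg_le_of_abs_le ((abs_real_inner_le_norm _ _).trans ?_)
      exact mul_le_mul_of_nonneg_right hstep (norm_nonneg _)
    rw [inner_sub_left] at hinner
    linarith
  have hends := hmono (left_mem_Icc.2 zero_le_one) (right_mem_Icc.2 zero_le_one) zero_le_one
  simp only [h, lineMap_apply_zero, lineMap_apply_one] at hends
  linarith

theorem ConcaveOn.norm_sub_sq_le_of_lipschitz_gradient (hconc : ConcaveOn ℝ univ d)
    (hgrad : ∀ u, HasGradientAt d (g u) u) (hlip : ∀ u v, ‖g u - g v‖ ≤ L * ‖u - v‖)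
    (hL : 0 ≤ L) (x y : E) :
    ‖g x - g y‖ ^ 2 ≤ 2 * L * (d y + ⟪g y, x - y⟫ - d x) := by
  rcases hL.eq_or_lt with rfl | hLpos
  · have hzero : ‖g x - g y‖ = 0 := le_antisymm (by simpa using hlip x y) (norm_nonneg _)
    simp [hzero]
  set Δ := g x - g y
  set z := x + L⁻¹ • Δ
  have hlow := add_inner_sub_le_of_lipschitz_gradient hgrad hlip x z
  have hup := hconc.le_add_inner_of_hasGradientAt (hgrad y) z
  have hzx : z - x = L⁻¹ • Δ := add_sub_cancel_left x _
  have hzy : z - y = (x - y) + (z - x) := by abel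
  rw [hzx] at hzy
  have hnorm : ‖L⁻¹ • Δ‖ ^ 2 = L⁻¹ ^ 2 * ‖Δ‖ ^ 2 := by
    rw [norm_smul, mul_pow, Real.norm_of_nonneg (inv_nonneg.2 hLpos.le)]
  rw [hzx, hnorm] at hlow
  rw [hzy, inner_add_right] at hup
  have hinner : ⟪g x, L⁻¹ • Δ⟫ - ⟪g y, L⁻¹ • Δ⟫ = L⁻¹ * ‖Δ‖ ^ 2 := by
    rw [← inner_sub_left, real_inner_smul_right, real_inner_self_eq_norm_sq]
  have hgain : L⁻¹ * ‖Δ‖ ^ 2 - L / 2 * (L⁻¹ ^ 2 * ‖Δ‖ ^ 2) = ‖Δ‖ ^ 2 / (2 * L) := by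
    field_simp
    ring
  have key : ‖Δ‖ ^ 2 / (2 * L) ≤ d y + ⟪g y, x - y⟫ - d x := by linarith
  rwa [div_le_iff₀ (by positivity), mul_comm] at key

theorem ConcaveOn.sub_inner_self_sub_le_norm_mul_sqrt (hconc : ConcaveOn ℝ univ d)
    (hgrad : ∀ u, HasGradientAt d (g u) u) (hlip : ∀ u v, ‖g u - g v‖ ≤ L * ‖u - v‖)
    (hL : 0 ≤ L) {x y : E} (hcs : ⟪g y, y⟫ = 0) (hfo : ⟪g y, x - y⟫ ≤ 0) :
    d x - ⟪g x, x⟫ - d y ≤ ‖x‖ * √(2 * L * (d y - d x)) := by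
  have hgap : ‖g x - g y‖ ≤ √(2 * L * (d y - d x)) := by
    refine Real.le_sqrt_of_sq_le ?_
    calc ‖g x - g y‖ ^ 2 ≤ 2 * L * (d y + ⟪g y, x - y⟫ - d x) :=
          hconc.norm_sub_sq_le_of_lipschitz_gradient hgrad hlip hL x y
      _ ≤ 2 * L * (d y - d x) := by gcongr; linarith
  have hfirst := hconc.le_add_inner_of_hasGradientAt (hgrad y) x
  rw [inner_sub_right, hcs, sub_zero] at hfirst
  calc d x - ⟪g x, x⟫ - d y ≤ ⟪g y - g x, x⟫ := by rw [inner_sub_left]; linarith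
    _ ≤ ‖g y - g x‖ * ‖x‖ := real_inner_le_norm _ _
    _ ≤ √(2 * L * (d y - d x)) * ‖x‖ := by rw [norm_sub_rev]; gcongr
    _ = ‖x‖ * √(2 * L * (d y - d x)) := mul_comm _ _

theorem primal_suboptimality_upper_bound_linear_general {n m p : ℕ}
    (f : EuclideanSpace ℝ (Fin n) → ℝ) (θ : ℝ) (hθ : 0 < θ)
    (At : EuclideanSpace ℝ (Fin n) →L[ℝ] EuclideanSpace ℝ (Fin (m + p)))
    (bt : EuclideanSpace ℝ (Fin (m + p)))
    (d : EuclideanSpace ℝ (Fin (m + p)) → ℝ)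
    (xbar : EuclideanSpace ℝ (Fin (m + p)) → EuclideanSpace ℝ (Fin n))
    (D : Set (EuclideanSpace ℝ (Fin (m + p))))
    (hconc : ConcaveOn ℝ Set.univ d)
    -- `∇d(u) = Ãx̄(u) + b̃`
    (hgrad : ∀ u, HasGradientAt d (At (xbar u) + bt) u)
    -- `∇d` is Lipschitz with constant `σ_max(Ã)²/θ`
    (hlip : ∀ u v, ‖(At (xbar u) + bt) - (At (xbar v) + bt)‖ ≤ ‖At‖ ^ 2 / θ * ‖u - v‖)
    -- `f(x̄(u)) = d(u) − ⟪∇d(u), u⟫`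
    (hfd : ∀ u, f (xbar u) = d u - ⟪At (xbar u) + bt, u⟫)
    (ustar : EuclideanSpace ℝ (Fin (m + p)))
    (dstar fstar : ℝ) (hds : d ustar = dstar)
    (hfs : fstar = dstar)
    -- complementary slackness and first-order optimality at `u⋆`
    (hcs : ⟪At (xbar ustar) + bt, ustar⟫ = 0)
    (hfo : ∀ u ∈ D, ⟪At (xbar ustar) + bt, u - ustar⟫ ≤ 0) :
    ∀ u ∈ D, f (xbar u) - fstar ≤ ‖u‖ * ‖At‖ * Real.sqrt (2 * (dstar - d u) / θ) := by
  intro u hu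
  have hbound := hconc.sub_inner_self_sub_le_norm_mul_sqrt (g := fun w => At (xbar w) + bt)
    hgrad hlip (div_nonneg (sq_nonneg _) hθ.le) hcs (hfo u hu)
  have hsqrt : √(2 * (‖At‖ ^ 2 / θ) * (dstar - d u)) = ‖At‖ * √(2 * (dstar - d u) / θ) := by
    rw [show 2 * (‖At‖ ^ 2 / θ) * (dstar - d u) = ‖At‖ ^ 2 * (2 * (dstar - d u) / θ) by ring,
      Real.sqrt_mul (sq_nonneg _), Real.sqrt_sq (norm_nonneg _)]
  rw [hds, hsqrt, ← mul_assoc] at hbound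
  rwa [hfd, hfs]

/-- Upper bound on primal suboptimality for the linearly constrained problem:
`f(x̄(u)) − f⋆ ≤ ‖u‖·σ_max(Ã)·√(2(d⋆ − d(u))/θ)` for every dual feasible `u`,
where `σ_max(Ã)` is the operator norm of `Ã`. -/
theorem primal_suboptimality_upper_bound_linear {n m p : ℕ}
    (X : Set (EuclideanSpace ℝ (Fin n))) (hXcl : IsClosed X) (hXcv : Convex ℝ X)
    (f : EuclideanSpace ℝ (Fin n) → ℝ) (θ : ℝ) (hθ : 0 < θ)
    (At : EuclideanSpace ℝ (Fin n) →L[ℝ] EuclideanSpace ℝ (Fin (m + p)))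
    (bt : EuclideanSpace ℝ (Fin (m + p)))
    (d : EuclideanSpace ℝ (Fin (m + p)) → ℝ)
    (xbar : EuclideanSpace ℝ (Fin (m + p)) → EuclideanSpace ℝ (Fin n))
    (D : Set (EuclideanSpace ℝ (Fin (m + p))))
    (hD : D = {u | ∀ i : Fin (m + p), (i : ℕ) < m → 0 ≤ u i})
    (hconc : ConcaveOn ℝ Set.univ d)
    -- `∇d(u) = Ãx̄(u) + b̃`
    (hgrad : ∀ u, HasGradientAt d (At (xbar u) + bt) u)
    -- `∇d` is Lipschitz with constant `σ_max(Ã)²/θ`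
    (hlip : ∀ u v, ‖(At (xbar u) + bt) - (At (xbar v) + bt)‖ ≤ ‖At‖ ^ 2 / θ * ‖u - v‖)
    -- `f(x̄(u)) = d(u) − ⟪∇d(u), u⟫`
    (hfd : ∀ u, f (xbar u) = d u - ⟪At (xbar u) + bt, u⟫)
    (ustar : EuclideanSpace ℝ (Fin (m + p))) (hustar : ustar ∈ D)
    (dstar fstar : ℝ) (hds : d ustar = dstar) (hub : ∀ v ∈ D, d v ≤ dstar)
    (hfs : fstar = dstar)
    -- complementary slackness and first-order optimality at `u⋆`
    (hcs : ⟪At (xbar ustar) + bt, ustar⟫ = 0)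
    (hfo : ∀ u ∈ D, ⟪At (xbar ustar) + bt, u - ustar⟫ ≤ 0) :
    ∀ u ∈ D, f (xbar u) - fstar ≤ ‖u‖ * ‖At‖ * Real.sqrt (2 * (dstar - d u) / θ) :=
  primal_suboptimality_upper_bound_linear_general f θ hθ At bt d xbar D hconc hgrad hlip hfd ustar
    dstar fstar hds hfs hcs hfo
end

section
/- Suppose X ⊆ ℝⁿ is closed convex, f is strongly convex on X with parameter θ, the constraints are linear (Ãx + b̃), the dual function d has ∇d Lipschitz with constant L̃ = σ_max(Ã)²/θ, and x̄(u) denotes the Lagrangian minimizer. Suppose a dual fast-gradient sequence (u_k) satisfies d⋆ − d(u_k) ≤ 2L̃‖u₀ − u⋆‖²/(k+1)² for k ≥ 1, where u⋆ is a dual optimum. Then ‖x̄(u_k) − x⋆‖ ≤ 2σ_max(Ã)‖u₀ − u⋆‖/(θ(k+1)) for all k ≥ 1. -/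
open scoped RealInnerProductSpace

/-!
If `s` is a subgradient of the Lagrangian `L(·,u)` at its minimiser `x̄(u)` satisfying the
first-order optimality condition, strong convexity evaluated at `x⋆` gives
`θ/2 ‖x̄(u) − x⋆‖² ≤ L(x⋆,u) − d(u) ≤ d⋆ − d(u)`, the last step being the saddle-point inequality.
Feeding the dual rate `O(1/(k+1)²)` into this error bound and taking square roots yields the
primal rate `O(1/(k+1))`.
-/

theorem half_mul_sq_norm_sub_le_of_subgradient_optimal {E : Type*} [NormedAddCommGroup E]
    [InnerProductSpace ℝ E] {L : E → ℝ} {θ c : ℝ} {x y s : E}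
    (hsc : L y - L x - ⟪s, y - x⟫ ≥ θ / 2 * ‖x - y‖ ^ 2) (hfoc : 0 ≤ ⟪s, y - x⟫)
    (hy : L y ≤ c) :
    θ / 2 * ‖x - y‖ ^ 2 ≤ c - L x := by
  linarith

theorem le_div_of_half_mul_sq_le_div_sq {a A c θ K : ℝ} (hθ : 0 < θ) (hK : 0 < K)
    (hA : 0 ≤ A) (hc : 0 ≤ c) (h : θ / 2 * a ^ 2 ≤ 2 * (A ^ 2 / θ) * c ^ 2 / K ^ 2) :
    a ≤ 2 * A * c / (θ * K) := by
  refine le_of_sq_le_sq ?_ (by positivity)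
  calc a ^ 2 = 2 / θ * (θ / 2 * a ^ 2) := by field_simp
    _ ≤ 2 / θ * (2 * (A ^ 2 / θ) * c ^ 2 / K ^ 2) := by gcongr
    _ = (2 * A * c / (θ * K)) ^ 2 := by field_simp

theorem fast_dual_gradient_primal_rate_general {n q : ℕ}
    (X : Set (EuclideanSpace ℝ (Fin n)))
    (f : EuclideanSpace ℝ (Fin n) → ℝ) (θ : ℝ) (hθ : 0 < θ)
    (At : EuclideanSpace ℝ (Fin n) →L[ℝ] EuclideanSpace ℝ (Fin q))
    (bt : EuclideanSpace ℝ (Fin q))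
    (d : EuclideanSpace ℝ (Fin q) → ℝ)
    (D : Set (EuclideanSpace ℝ (Fin q)))
    (xbar : EuclideanSpace ℝ (Fin q) → EuclideanSpace ℝ (Fin n))
    (xstar : EuclideanSpace ℝ (Fin n)) (hxstar : xstar ∈ X)
    (G : EuclideanSpace ℝ (Fin q) → EuclideanSpace ℝ (Fin n) → Set (EuclideanSpace ℝ (Fin n)))
    -- strong convexity of the Lagrangian `L(·,u) = f + ⟪u, Ã· + b̃⟫` on `X` with parameter `θ`
    (hsc : ∀ u ∈ D, ∀ x ∈ X, ∀ y ∈ X, ∀ s ∈ G u x,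
      (f y + ⟪u, At y + bt⟫) - (f x + ⟪u, At x + bt⟫) - ⟪s, y - x⟫ ≥ θ / 2 * ‖x - y‖ ^ 2)
    (hxbarX : ∀ u ∈ D, xbar u ∈ X)
    -- `x̄(u)` minimizes the Lagrangian over `X`, with first-order optimality
    (hfoc : ∀ u ∈ D, ∃ s ∈ G u (xbar u), ∀ x ∈ X, 0 ≤ ⟪s, x - xbar u⟫)
    -- dual function and zero duality gap / saddle point property
    (hd : ∀ u ∈ D, d u = f (xbar u) + ⟪u, At (xbar u) + bt⟫)
    (dstar : ℝ) (hsaddle : ∀ u ∈ D, f xstar + ⟪u, At xstar + bt⟫ ≤ dstar)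
    (ustar : EuclideanSpace ℝ (Fin q))
    (u : ℕ → EuclideanSpace ℝ (Fin q)) (huD : ∀ k, u k ∈ D)
    -- dual fast-gradient rate
    (hrate : ∀ k : ℕ, 1 ≤ k →
      dstar - d (u k) ≤ 2 * (‖At‖ ^ 2 / θ) * ‖u 0 - ustar‖ ^ 2 / ((k : ℝ) + 1) ^ 2) :
    ∀ k : ℕ, 1 ≤ k →
      ‖xbar (u k) - xstar‖ ≤ 2 * ‖At‖ * ‖u 0 - ustar‖ / (θ * ((k : ℝ) + 1)) := by
  intro k hk
  obtain ⟨s, hsG, hs⟩ := hfoc (u k) (huD k)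
  have error_bound : θ / 2 * ‖xbar (u k) - xstar‖ ^ 2 ≤ dstar - d (u k) := by
    rw [hd (u k) (huD k)]
    exact half_mul_sq_norm_sub_le_of_subgradient_optimal (L := fun x => f x + ⟪u k, At x + bt⟫)
      (hsc (u k) (huD k) _ (hxbarX (u k) (huD k)) xstar hxstar s hsG) (hs xstar hxstar)
      (hsaddle (u k) (huD k))
  exact le_div_of_half_mul_sq_le_div_sq hθ (by positivity) (norm_nonneg _) (norm_nonneg _)
    (error_bound.trans (hrate k hk))

/-- Primal convergence rate of a fast dual gradient method for the linearly constrained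
strongly convex problem: if the dual sequence satisfies
`d⋆ − d(u_k) ≤ 2L̃‖u₀ − u⋆‖²/(k+1)²` with `L̃ = σ_max(Ã)²/θ`, then
`‖x̄(u_k) − x⋆‖ ≤ 2σ_max(Ã)‖u₀ − u⋆‖/(θ(k+1))` for all `k ≥ 1`. -/
theorem fast_dual_gradient_primal_rate {n q : ℕ}
    (X : Set (EuclideanSpace ℝ (Fin n))) (hXcl : IsClosed X) (hXcv : Convex ℝ X)
    (f : EuclideanSpace ℝ (Fin n) → ℝ) (θ : ℝ) (hθ : 0 < θ)
    (At : EuclideanSpace ℝ (Fin n) →L[ℝ] EuclideanSpace ℝ (Fin q))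
    (bt : EuclideanSpace ℝ (Fin q))
    (d : EuclideanSpace ℝ (Fin q) → ℝ)
    (D : Set (EuclideanSpace ℝ (Fin q)))
    (xbar : EuclideanSpace ℝ (Fin q) → EuclideanSpace ℝ (Fin n))
    (xstar : EuclideanSpace ℝ (Fin n)) (hxstar : xstar ∈ X)
    (G : EuclideanSpace ℝ (Fin q) → EuclideanSpace ℝ (Fin n) → Set (EuclideanSpace ℝ (Fin n)))
    -- strong convexity of the Lagrangian `L(·,u) = f + ⟪u, Ã· + b̃⟫` on `X` with parameter `θ`
    (hsc : ∀ u ∈ D, ∀ x ∈ X, ∀ y ∈ X, ∀ s ∈ G u x,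
      (f y + ⟪u, At y + bt⟫) - (f x + ⟪u, At x + bt⟫) - ⟪s, y - x⟫ ≥ θ / 2 * ‖x - y‖ ^ 2)
    (hxbarX : ∀ u ∈ D, xbar u ∈ X)
    -- `x̄(u)` minimizes the Lagrangian over `X`, with first-order optimality
    (hmin : ∀ u ∈ D, ∀ x ∈ X,
      f (xbar u) + ⟪u, At (xbar u) + bt⟫ ≤ f x + ⟪u, At x + bt⟫)
    (hfoc : ∀ u ∈ D, ∃ s ∈ G u (xbar u), ∀ x ∈ X, 0 ≤ ⟪s, x - xbar u⟫)
    -- dual function and zero duality gap / saddle point property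
    (hd : ∀ u ∈ D, d u = f (xbar u) + ⟪u, At (xbar u) + bt⟫)
    (dstar : ℝ) (hsaddle : ∀ u ∈ D, f xstar + ⟪u, At xstar + bt⟫ ≤ dstar)
    (ustar : EuclideanSpace ℝ (Fin q)) (hustar : ustar ∈ D)
    (u : ℕ → EuclideanSpace ℝ (Fin q)) (huD : ∀ k, u k ∈ D)
    -- dual fast-gradient rate
    (hrate : ∀ k : ℕ, 1 ≤ k →
      dstar - d (u k) ≤ 2 * (‖At‖ ^ 2 / θ) * ‖u 0 - ustar‖ ^ 2 / ((k : ℝ) + 1) ^ 2) :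
    ∀ k : ℕ, 1 ≤ k →
      ‖xbar (u k) - xstar‖ ≤ 2 * ‖At‖ * ‖u 0 - ustar‖ / (θ * ((k : ℝ) + 1)) :=
  fast_dual_gradient_primal_rate_general X f θ hθ At bt d D xbar xstar hxstar G hsc hxbarX hfoc hd
    dstar hsaddle ustar u huD hrate
end

section
/- Let d : ℝ^q → ℝ be concave differentiable, D ⊆ ℝ^q closed convex with sup_D d = d⋆ attained at u⋆ ∈ D, and let u ∈ D, u⁺ = P_D[u + α∇d(u)] for some α > 0. Then d⋆ − d(u) ≤ (‖∇d(u)‖ + ‖u − u⋆‖/α)·‖u⁺ − u‖. -/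
open scoped RealInnerProductSpace

/-!
Concavity bounds `d u⋆ - d u` by `⟪∇d(u), u⋆ - u⟫`. Split `u⋆ - u = (u⁺ - u) + (u⋆ - u⁺)`: the first
part contributes `‖∇d(u)‖ ‖u⁺ - u‖` by Cauchy–Schwarz, and the variational inequality of the
projection gives `α ⟪∇d(u), u⋆ - u⁺⟫ ≤ ⟪u⁺ - u, u⋆ - u⁺⟫ ≤ ‖u⁺ - u‖ ‖u⋆ - u‖`.
-/

section

variable {E : Type*} [NormedAddCommGroup E] [InnerProductSpace ℝ E]

theorem ConcaveOn.sub_le_inner_of_hasGradientAt [CompleteSpace E] {s : Set E} {f : E → ℝ}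
    {g x y : E} (hf : ConcaveOn ℝ s f) (hx : x ∈ s) (hy : y ∈ s) (hg : HasGradientAt f g x) :
    f y - f x ≤ ⟪g, y - x⟫ := by
  set line := AffineMap.lineMap (k := ℝ) x y
  have hline : ConcaveOn ℝ (line ⁻¹' s) (f ∘ line) := hf.comp_affineMap line
  have hderiv : HasDerivAt (f ∘ line) ⟪g, y - x⟫ 0 := by
    have := hg.hasFDerivAt.comp_hasDerivAt_of_eq (0 : ℝ) AffineMap.hasDerivAt_lineMap
      (AffineMap.lineMap_apply_zero x y).symm
    simpa using this
  simpa [slope, line] using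
    hline.slope_le_of_hasDerivAt (by simpa [line] using hx) (by simpa [line] using hy)
      zero_lt_one hderiv

theorem inner_sub_le_of_projected_step {u v g p : E} {α : ℝ} (hα : 0 < α)
    (hp : ⟪u + α • g - p, v - p⟫ ≤ 0) :
    ⟪g, v - u⟫ ≤ (‖g‖ + ‖u - v‖ / α) * ‖p - u‖ := by
  have hstep : α * ⟪g, v - p⟫ ≤ ‖p - u‖ * ‖u - v‖ :=
    calc α * ⟪g, v - p⟫ ≤ ⟪p - u, v - p⟫ := by
          rw [show u + α • g - p = α • g - (p - u) by abel, inner_sub_left,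
            real_inner_smul_left] at hp
          linarith
      _ = ⟪p - u, v - u⟫ - ‖p - u‖ ^ 2 := by
          rw [← real_inner_self_eq_norm_sq, ← inner_sub_right, sub_sub_sub_cancel_right]
      _ ≤ ‖p - u‖ * ‖u - v‖ := by
          rw [norm_sub_rev u v]
          nlinarith [real_inner_le_norm (p - u) (v - u), sq_nonneg ‖p - u‖]
  calc ⟪g, v - u⟫ = ⟪g, p - u⟫ + ⟪g, v - p⟫ := by
        rw [← inner_add_right, add_comm, sub_add_sub_cancel]
    _ ≤ ‖g‖ * ‖p - u‖ + ‖p - u‖ * ‖u - v‖ / α := by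
        gcongr
        · exact real_inner_le_norm g (p - u)
        · rwa [le_div_iff₀ hα, mul_comm]
    _ = (‖g‖ + ‖u - v‖ / α) * ‖p - u‖ := by ring

end

theorem dual_suboptimality_step_bound_general {q : ℕ}
    (d : EuclideanSpace ℝ (Fin q) → ℝ)
    (d' : EuclideanSpace ℝ (Fin q) → EuclideanSpace ℝ (Fin q))
    (hconc : ConcaveOn ℝ Set.univ d)
    (hgrad : ∀ w, HasGradientAt d (d' w) w)
    (D : Set (EuclideanSpace ℝ (Fin q)))
    -- `P` is the Euclidean projection onto `D`
    (P : EuclideanSpace ℝ (Fin q) → EuclideanSpace ℝ (Fin q))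
    (hP : ∀ y, P y ∈ D ∧ ∀ v ∈ D, ⟪y - P y, v - P y⟫ ≤ 0)
    (ustar : EuclideanSpace ℝ (Fin q)) (hustar : ustar ∈ D)
    (u : EuclideanSpace ℝ (Fin q))
    (α : ℝ) (hα : 0 < α)
    (uplus : EuclideanSpace ℝ (Fin q)) (huplus : uplus = P (u + α • d' u)) :
    d ustar - d u ≤ (‖d' u‖ + ‖u - ustar‖ / α) * ‖uplus - u‖ := by
  have hproj : ⟪u + α • d' u - uplus, ustar - uplus⟫ ≤ 0 := huplus ▸ (hP _).2 ustar hustar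
  calc d ustar - d u ≤ ⟪d' u, ustar - u⟫ :=
        hconc.sub_le_inner_of_hasGradientAt trivial trivial (hgrad u)
    _ ≤ (‖d' u‖ + ‖u - ustar‖ / α) * ‖uplus - u‖ := inner_sub_le_of_projected_step hα hproj

/-- Dual suboptimality bound via the projected gradient step: for concave differentiable
`d`, closed convex `D` with maximizer `u⋆ ∈ D`, `u ∈ D`, `α > 0`, and
`u⁺ = P_D[u + α∇d(u)]`:  `d⋆ − d(u) ≤ (‖∇d(u)‖ + ‖u − u⋆‖/α)·‖u⁺ − u‖`. -/
theorem dual_suboptimality_step_bound {q : ℕ}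
    (d : EuclideanSpace ℝ (Fin q) → ℝ)
    (d' : EuclideanSpace ℝ (Fin q) → EuclideanSpace ℝ (Fin q))
    (hconc : ConcaveOn ℝ Set.univ d)
    (hgrad : ∀ w, HasGradientAt d (d' w) w)
    (D : Set (EuclideanSpace ℝ (Fin q))) (hDcl : IsClosed D) (hDcv : Convex ℝ D)
    -- `P` is the Euclidean projection onto `D`
    (P : EuclideanSpace ℝ (Fin q) → EuclideanSpace ℝ (Fin q))
    (hP : ∀ y, P y ∈ D ∧ ∀ v ∈ D, ⟪y - P y, v - P y⟫ ≤ 0)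
    (ustar : EuclideanSpace ℝ (Fin q)) (hustar : ustar ∈ D)
    (hmax : ∀ v ∈ D, d v ≤ d ustar)
    (u : EuclideanSpace ℝ (Fin q)) (hu : u ∈ D)
    (α : ℝ) (hα : 0 < α)
    (uplus : EuclideanSpace ℝ (Fin q)) (huplus : uplus = P (u + α • d' u)) :
    d ustar - d u ≤ (‖d' u‖ + ‖u - ustar‖ / α) * ‖uplus - u‖ :=
  dual_suboptimality_step_bound_general d d' hconc hgrad D P hP ustar hustar u α hα uplus huplus
end
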